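/- arXiv:2203.07364 — 5 statements merged into one kernel-verified Lean document; each statement's English description precedes it below -/
import Mathlib

section
/- For a directed cycle of length n ≥ 3, to transform it into a complete dominance graph (a tournament where some ordering i₁,...,iₙ of vertices has exactly the edges {(i_p,i_q) : p < q}), the minimum number k of edge additions or removals required is k = 1 + (n-2)(n-1)/2. -/
/-- Edge set of the directed cycle of length `n` on `Fin n`:
edges `(i, i+1)` cyclically. -/
def cycleEdges (n : ℕ) : Finset (Fin n × Fin n) :=
  Finset.univ.image (fun i : Fin n => (i, finRotate n i))

/-- Edge set of the complete dominance graph associated with the ordering `σ`: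
edge from `u` to `v` iff `u` comes strictly before `v` in the ordering. -/
def domEdges {n : ℕ} (σ : Equiv.Perm (Fin n)) : Finset (Fin n × Fin n) :=
  Finset.univ.filter (fun p => σ p.1 < σ p.2)

/-- A directed graph (given by its edge set) is a complete dominance graph. -/
def IsDom {n : ℕ} (E : Finset (Fin n × Fin n)) : Prop :=
  ∃ σ : Equiv.Perm (Fin n), E = domEdges σ

open Finset

lemma cycleEdges_card (n : ℕ) : (cycleEdges n).card = n := by
  rw [cycleEdges, Finset.card_image_of_injective _ (fun a b hab => congrArg Prod.fst hab),
    Finset.card_univ, Fintype.card_fin]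

lemma filter_lt_card (n : ℕ) :
    (Finset.univ.filter (fun p : Fin n × Fin n => p.1 < p.2)).card = n.choose 2 := by
  have hswap : (Finset.univ.filter (fun p : Fin n × Fin n => p.2 < p.1)).card
      = (Finset.univ.filter (fun p : Fin n × Fin n => p.1 < p.2)).card := by
    apply Finset.card_bij (fun p _ => p.swap)
    · intro p hp; simp only [mem_filter, mem_univ, true_and] at hp ⊢; exact hp
    · intro a _ b _ h; exact Prod.swap_injective h
    · intro b hb
      exact ⟨b.swap, by simpa using (mem_filter.mp hb).2, by simp⟩
  have hdiag : (Finset.univ.filter (fun p : Fin n × Fin n => p.1 = p.2)).card = n := by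
    have : (Finset.univ.filter (fun p : Fin n × Fin n => p.1 = p.2))
        = Finset.univ.image (fun i : Fin n => (i, i)) := by
      ext p
      simp only [mem_filter, mem_univ, true_and, mem_image]
      constructor
      · intro h; exact ⟨p.1, by simp [Prod.ext_iff, h]⟩
      · rintro ⟨i, rfl⟩; rfl
    rw [this, Finset.card_image_of_injective _ (fun a b hab => congrArg Prod.fst hab),
      Finset.card_univ, Fintype.card_fin]
  have htot := Finset.card_filter_add_card_filter_not
    (s := (Finset.univ : Finset (Fin n × Fin n))) (p := fun p => p.1 < p.2)
  have hneg : (Finset.univ.filter (fun p : Fin n × Fin n => ¬ p.1 < p.2))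
      = (Finset.univ.filter (fun p : Fin n × Fin n => p.2 < p.1))
        ∪ (Finset.univ.filter (fun p : Fin n × Fin n => p.1 = p.2)) := by
    rw [← Finset.filter_or]
    apply Finset.filter_congr
    intro p _
    constructor
    · intro h
      rcases lt_or_eq_of_le (not_lt.mp h) with h' | h'
      · exact Or.inl h'
      · exact Or.inr h'.symm
    · rintro (h | h)
      · exact not_lt.mpr h.le
      · exact not_lt.mpr h.ge
  have hdisj : Disjoint (Finset.univ.filter (fun p : Fin n × Fin n => p.2 < p.1))
      (Finset.univ.filter (fun p : Fin n × Fin n => p.1 = p.2)) := by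
    rw [Finset.disjoint_filter]
    intro p _ h h'
    exact absurd h' (ne_of_gt h)
  rw [hneg, Finset.card_union_of_disjoint hdisj, hswap, hdiag] at htot
  have huniv : (Finset.univ : Finset (Fin n × Fin n)).card = n * n := by
    simp [Fintype.card_fin]
  rw [huniv] at htot
  have hnn : n * (n - 1) = n * n - n := by
    cases n with
    | zero => simp
    | succ m => simp [Nat.mul_succ, Nat.succ_mul, Nat.mul_sub, Nat.mul_one]
  have heven : 2 * (n.choose 2) = n * (n - 1) := by
    rw [Nat.choose_two_right, Nat.two_mul_div_two_of_even]
    rcases Nat.even_or_odd n with h | h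
    · exact h.mul_right _
    · cases n with
      | zero => simp
      | succ m =>
        have : Even m := by
          rcases Nat.even_or_odd m with h' | h'
          · exact h'
          · exact absurd (h'.add_one) (by simpa using h)
        simp only [Nat.succ_sub_one]
        exact this.mul_left _
  omega

lemma domEdges_card {n : ℕ} (σ : Equiv.Perm (Fin n)) : (domEdges σ).card = n.choose 2 := by
  rw [← filter_lt_card n, domEdges]
  apply Finset.card_bij (fun p _ => (σ p.1, σ p.2))
  · intro p hp; simp only [mem_filter, mem_univ, true_and] at hp ⊢; exact hp
  · intro a _ b _ h
    simp only [Prod.mk.injEq] at h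
    exact Prod.ext (σ.injective h.1) (σ.injective h.2)
  · intro b hb
    refine ⟨(σ.symm b.1, σ.symm b.2), ?_, by simp⟩
    simp only [mem_filter, mem_univ, true_and, Equiv.apply_symm_apply]
    exact (mem_filter.mp hb).2

lemma inter_card_le {n : ℕ} (hn : 3 ≤ n) (σ : Equiv.Perm (Fin n)) :
    (cycleEdges n ∩ domEdges σ).card ≤ n - 1 := by
  by_contra hcon
  push_neg at hcon
  have hle : (cycleEdges n).card ≤ (cycleEdges n ∩ domEdges σ).card := by
    rw [cycleEdges_card]
    have := Finset.card_le_card (Finset.inter_subset_left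
      (s₁ := cycleEdges n) (s₂ := domEdges σ))
    rw [cycleEdges_card] at this
    omega
  have heq := Finset.eq_of_subset_of_card_le
    (Finset.inter_subset_left (s₁ := cycleEdges n) (s₂ := domEdges σ)) hle
  have hsub : cycleEdges n ⊆ domEdges σ := by
    rw [← heq]; exact Finset.inter_subset_right
  obtain ⟨m, rfl⟩ : ∃ m, n = m + 1 := ⟨n - 1, by omega⟩
  have hstep : ∀ i : Fin (m + 1), σ i < σ (i + 1) := by
    intro i
    have hmem : (i, finRotate (m + 1) i) ∈ cycleEdges (m + 1) := by
      rw [cycleEdges]; exact Finset.mem_image_of_mem _ (mem_univ i)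
    have := hsub hmem
    rw [domEdges, mem_filter] at this
    simpa [finRotate_succ_apply] using this.2
  have key : ∀ k : ℕ, (hk : k ≤ m) → σ 0 ≤ σ ⟨k, by omega⟩ := by
    intro k
    induction k with
    | zero => intro _; exact le_of_eq (congrArg σ (by ext; simp))
    | succ j ih =>
      intro hk
      have h1 : σ 0 ≤ σ ⟨j, by omega⟩ := ih (by omega)
      have h2 := hstep ⟨j, by omega⟩
      have h3 : (⟨j, by omega⟩ : Fin (m + 1)) + 1 = ⟨j + 1, by omega⟩ := by
        ext
        simp [Fin.add_def, Nat.mod_eq_of_lt (by omega : j + 1 < m + 1)]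
      rw [h3] at h2
      exact h1.trans h2.le
  have h1 : σ 0 ≤ σ ⟨m, by omega⟩ := key m le_rfl
  have h2 := hstep ⟨m, by omega⟩
  have h3 : (⟨m, by omega⟩ : Fin (m + 1)) + 1 = 0 := by
    ext
    simp [Fin.add_def]
  rw [h3] at h2
  exact absurd h2 (not_lt.mpr h1)

lemma inter_card_one {n : ℕ} (hn : 3 ≤ n) :
    (cycleEdges n ∩ domEdges 1).card = n - 1 := by
  obtain ⟨m, rfl⟩ : ∃ m, n = m + 1 := ⟨n - 1, by omega⟩
  have heq : cycleEdges (m + 1) ∩ domEdges 1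
      = Finset.image (fun i : Fin (m + 1) => (i, finRotate (m + 1) i))
          (Finset.univ.erase (Fin.last m)) := by
    ext p
    constructor
    · intro hp
      rw [Finset.mem_inter] at hp
      obtain ⟨hc, hd⟩ := hp
      rw [cycleEdges, Finset.mem_image] at hc
      obtain ⟨i, _, rfl⟩ := hc
      refine Finset.mem_image_of_mem _ (Finset.mem_erase.mpr ⟨?_, mem_univ _⟩)
      rintro rfl
      rw [domEdges, Finset.mem_filter] at hd
      have := hd.2
      simp [finRotate_last, Fin.lt_def] at this
    · intro hp
      rw [Finset.mem_image] at hp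
      obtain ⟨i, hi, rfl⟩ := hp
      have hi' := (Finset.mem_erase.mp hi).1
      refine Finset.mem_inter.mpr ⟨Finset.mem_image_of_mem _ (mem_univ _), ?_⟩
      rw [domEdges, Finset.mem_filter]
      refine ⟨mem_univ _, ?_⟩
      simp only [Equiv.Perm.coe_one, id_eq, Fin.lt_def, coe_finRotate_of_ne_last hi']
      omega
  rw [heq, Finset.card_image_of_injective _ (fun a b hab => congrArg Prod.fst hab),
    Finset.card_erase_of_mem (mem_univ _), Finset.card_univ, Fintype.card_fin]

lemma symmDiff_card {n : ℕ} (σ : Equiv.Perm (Fin n)) :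
    (symmDiff (cycleEdges n) (domEdges σ)).card
      = (n - (cycleEdges n ∩ domEdges σ).card)
        + (n.choose 2 - (cycleEdges n ∩ domEdges σ).card) := by
  rw [symmDiff_def]
  have hdisj : Disjoint (cycleEdges n \ domEdges σ) (domEdges σ \ cycleEdges n) :=
    disjoint_sdiff_sdiff
  rw [Finset.sup_eq_union, Finset.card_union_of_disjoint hdisj]
  have h1 := Finset.card_inter_add_card_sdiff (cycleEdges n) (domEdges σ)
  have h2 := Finset.card_inter_add_card_sdiff (domEdges σ) (cycleEdges n)
  rw [Finset.inter_comm] at h2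
  rw [cycleEdges_card] at h1
  rw [domEdges_card] at h2
  omega

/-- for the directed cycle of length `n ≥ 3`, the minimum number of
edge additions/removals (cardinality of the symmetric difference of edge sets)
needed to reach a complete dominance graph is `1 + (n-2)(n-1)/2`. -/
theorem cycle_min_edge_changes (n : ℕ) (hn : 3 ≤ n) :
    IsLeast {k : ℕ | ∃ E : Finset (Fin n × Fin n), IsDom E ∧
        (symmDiff (cycleEdges n) E).card = k}
      (1 + (n - 2) * (n - 1) / 2) := by
  obtain ⟨m, rfl⟩ : ∃ m, n = m + 3 := ⟨n - 3, by omega⟩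
  set n := m + 3 with hn'
  have ha : (n - 2) * (n - 1) = (m + 1) * (m + 2) := by simp [hn']
  have heven : 2 * ((m + 1) * (m + 2) / 2) = (m + 1) * (m + 2) :=
    Nat.two_mul_div_two_of_even (Nat.even_mul_succ_self (m + 1))
  have h1' : n - 1 = m + 2 := by omega
  have hch : 2 * (n.choose 2) = (m + 1) * (m + 2) + 2 * (m + 2) := by
    have he : Even (n * (m + 2)) := by
      rw [hn', Nat.mul_comm]; exact Nat.even_mul_succ_self (m + 2)
    rw [Nat.choose_two_right, h1', Nat.two_mul_div_two_of_even he, hn']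
    ring
  constructor
  · refine ⟨domEdges 1, ⟨1, rfl⟩, ?_⟩
    rw [symmDiff_card, inter_card_one (by omega)]
    rw [ha]
    omega
  · rintro k ⟨E, ⟨σ, rfl⟩, rfl⟩
    rw [symmDiff_card]
    have hle := inter_card_le (by omega) σ
    have hle2 : (cycleEdges n ∩ domEdges σ).card ≤ n := by
      have := Finset.card_le_card (Finset.inter_subset_left
        (s₁ := cycleEdges n) (s₂ := domEdges σ))
      rw [cycleEdges_card] at this
      exact this
    rw [ha]
    omega
end

section
/- The edge rankability of a directed cycle of length n is R_e(C) = 1 - (2 + (n-1)(n-2)) / (n!·(n-1)), for n ≥ 3. -/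
namespace CycleRank

variable {n : ℕ}

/-- The ascent set of a permutation around the cycle. -/
def asc (n : ℕ) (σ : Equiv.Perm (Fin n)) : Finset (Fin n) :=
  Finset.univ.filter (fun i => σ i < σ (finRotate n i))

/-- Number of pairs (i,j) with i < j. -/
def L (n : ℕ) : ℕ :=
  (Finset.univ.filter (fun p : Fin n × Fin n => p.1 < p.2)).card

lemma pair_inj : Function.Injective (fun i : Fin n => (i, finRotate n i)) :=
  fun _ _ h => congrArg Prod.fst h

lemma card_cycleEdges : (cycleEdges n).card = n := by
  rw [cycleEdges, Finset.card_image_of_injective _ pair_inj, Finset.card_univ,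
    Fintype.card_fin]

lemma two_mul_L (n : ℕ) : 2 * L n + n = n * n := by
  classical
  have hswap : (Finset.univ.filter (fun p : Fin n × Fin n => p.2 < p.1))
      = (Finset.univ.filter (fun p : Fin n × Fin n => p.1 < p.2)).image Prod.swap := by
    ext ⟨a, b⟩
    simp only [Finset.mem_image, Finset.mem_filter, Finset.mem_univ, true_and, Prod.ext_iff]
    constructor
    · intro h; exact ⟨(b, a), h, rfl, rfl⟩
    · rintro ⟨⟨x, y⟩, h, rfl, rfl⟩; exact h
  have h1 : (Finset.univ.filter (fun p : Fin n × Fin n => p.2 < p.1)).card = L n := by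
    rw [hswap, Finset.card_image_of_injective _ Prod.swap_injective]; rfl
  have hdiag : (Finset.univ.filter (fun p : Fin n × Fin n => p.1 = p.2)).card = n := by
    have : (Finset.univ.filter (fun p : Fin n × Fin n => p.1 = p.2))
        = Finset.univ.image (fun i : Fin n => (i, i)) := by
      ext ⟨a, b⟩
      simp only [Finset.mem_image, Finset.mem_filter, Finset.mem_univ, true_and, Prod.ext_iff]
      constructor
      · rintro rfl; exact ⟨a, rfl, rfl⟩
      · rintro ⟨x, rfl, rfl⟩; rfl
    rw [this, Finset.card_image_of_injective _ (fun a b h => congrArg Prod.fst h),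
      Finset.card_univ, Fintype.card_fin]
  have hunion : (Finset.univ.filter (fun p : Fin n × Fin n => ¬ p.1 < p.2))
      = (Finset.univ.filter (fun p : Fin n × Fin n => p.2 < p.1))
        ∪ (Finset.univ.filter (fun p : Fin n × Fin n => p.1 = p.2)) := by
    ext ⟨a, b⟩
    simp only [Finset.mem_union, Finset.mem_filter, Finset.mem_univ, true_and, not_lt]
    constructor
    · intro h; exact h.lt_or_eq.imp id (fun h' => h'.symm)
    · intro h; exact h.elim le_of_lt (fun h' => le_of_eq h'.symm)
  have hdisj : Disjoint (Finset.univ.filter (fun p : Fin n × Fin n => p.2 < p.1))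
      (Finset.univ.filter (fun p : Fin n × Fin n => p.1 = p.2)) := by
    rw [Finset.disjoint_filter]
    intro p _ h h'
    exact absurd h'.symm (ne_of_lt h)
  have hsplit := Finset.card_filter_add_card_filter_not
    (s := (Finset.univ : Finset (Fin n × Fin n))) (p := fun p => p.1 < p.2)
  have huniv : (Finset.univ : Finset (Fin n × Fin n)).card = n * n := by
    simp [Finset.card_univ]
  rw [hunion, Finset.card_union_of_disjoint hdisj, h1, hdiag, huniv] at hsplit
  have hLdef : (Finset.univ.filter (fun p : Fin n × Fin n => p.1 < p.2)).card = L n := rfl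
  rw [hLdef] at hsplit
  omega

lemma card_domEdges (σ : Equiv.Perm (Fin n)) : (domEdges σ).card = L n := by
  classical
  have him : domEdges σ
      = (Finset.univ.filter (fun p : Fin n × Fin n => p.1 < p.2)).image
          (fun p => (σ.symm p.1, σ.symm p.2)) := by
    ext ⟨a, b⟩
    simp only [domEdges, Finset.mem_image, Finset.mem_filter, Finset.mem_univ, true_and,
      Prod.ext_iff]
    constructor
    · intro h
      exact ⟨(σ a, σ b), h, by simp, by simp⟩
    · rintro ⟨⟨x, y⟩, h, rfl, rfl⟩
      simpa using h
  rw [him, Finset.card_image_of_injective]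
  · rfl
  · intro p q h
    have h1 := congrArg Prod.fst h
    have h2 := congrArg Prod.snd h
    simp only at h1 h2
    exact Prod.ext (σ.symm.injective h1) (σ.symm.injective h2)

lemma inter_eq (σ : Equiv.Perm (Fin n)) :
    cycleEdges n ∩ domEdges σ = (asc n σ).image (fun i => (i, finRotate n i)) := by
  classical
  ext ⟨a, b⟩
  simp only [cycleEdges, domEdges, asc, Finset.mem_inter, Finset.mem_image, Finset.mem_filter,
    Finset.mem_univ, true_and, Prod.ext_iff]
  constructor
  · rintro ⟨⟨i, rfl, rfl⟩, h⟩
    exact ⟨i, h, rfl, rfl⟩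
  · rintro ⟨i, h, rfl, rfl⟩
    exact ⟨⟨i, rfl, rfl⟩, h⟩

lemma card_inter (σ : Equiv.Perm (Fin n)) :
    (cycleEdges n ∩ domEdges σ).card = (asc n σ).card := by
  rw [inter_eq, Finset.card_image_of_injective _ pair_inj]

lemma card_symmDiff (σ : Equiv.Perm (Fin n)) :
    (symmDiff (cycleEdges n) (domEdges σ)).card
      = (n - (asc n σ).card) + (L n - (asc n σ).card) := by
  classical
  have hd : Disjoint (cycleEdges n \ domEdges σ) (domEdges σ \ cycleEdges n) :=
    disjoint_sdiff_sdiff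
  rw [symmDiff_def, Finset.sup_eq_union, Finset.card_union_of_disjoint hd]
  have h1 := Finset.card_inter_add_card_sdiff (cycleEdges n) (domEdges σ)
  have h2 := Finset.card_inter_add_card_sdiff (domEdges σ) (cycleEdges n)
  rw [Finset.inter_comm] at h2
  rw [card_inter] at h1 h2
  rw [card_cycleEdges] at h1
  rw [card_domEdges] at h2
  omega

open Fin.NatCast Fin.CommRing in
lemma exists_descent (σ : Equiv.Perm (Fin (n + 1))) :
    ∃ i, ¬ σ i < σ (finRotate (n + 1) i) := by
  by_contra h
  push_neg at h
  have key : ∀ t : ℕ, 1 ≤ t → t ≤ n + 1 → σ 0 < σ ((t : Fin (n + 1))) := by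
    intro t
    induction t with
    | zero => omega
    | succ s ih =>
      intro _ hs
      rcases Nat.eq_zero_or_pos s with hs0 | hs1
      · subst hs0
        have := h 0
        rw [finRotate_succ_apply, zero_add] at this
        simpa using this
      · have h1 := ih hs1 (by omega)
        have h2 := h ((s : Fin (n + 1)))
        rw [finRotate_succ_apply] at h2
        have hcast : ((s : Fin (n + 1)) + 1) = ((s + 1 : ℕ) : Fin (n + 1)) := by
          push_cast; ring
        rw [hcast] at h2
        exact h1.trans h2
  have := key (n + 1) (by omega) le_rfl
  rw [Fin.natCast_self] at this
  exact lt_irrefl _ this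

lemma asc_card_le (σ : Equiv.Perm (Fin (n + 1))) : (asc (n + 1) σ).card ≤ n := by
  obtain ⟨i, hi⟩ := exists_descent σ
  have hne : asc (n + 1) σ ≠ Finset.univ := by
    intro h
    have : i ∈ asc (n + 1) σ := h ▸ Finset.mem_univ i
    rw [asc, Finset.mem_filter] at this
    exact hi this.2
  have := (Finset.card_lt_iff_ne_univ _).2 hne
  rw [Fintype.card_fin] at this
  omega

lemma asc_card_le_L (σ : Equiv.Perm (Fin n)) : (asc n σ).card ≤ L n := by
  rw [← card_inter, ← card_domEdges σ]
  exact Finset.card_le_card Finset.inter_subset_right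

lemma lt_succ_iff (y : Fin (n + 1)) : y < y + 1 ↔ y ≠ Fin.last n := by
  rw [Fin.lt_iff_val_lt_val, Fin.val_add_one]
  split
  · rename_i h
    simp [h]
  · rename_i h
    simp [h]

open Fin.NatCast Fin.CommRing in
lemma asc_subRight (c : Fin (n + 1)) :
    asc (n + 1) (Equiv.subRight c) = Finset.univ.erase (Fin.last n + c) := by
  ext x
  simp only [asc, Finset.mem_filter, Finset.mem_univ, true_and, Finset.mem_erase,
    Equiv.subRight_apply, finRotate_succ_apply, and_true]
  have h1 : x + 1 - c = (x - c) + 1 := by ring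
  rw [h1, lt_succ_iff]
  constructor
  · intro h h'
    exact h (by rw [h']; ring)
  · intro h h'
    apply h
    have : x - c + c = Fin.last n + c := by rw [h']
    simpa using this

lemma asc_subRight_card (c : Fin (n + 1)) :
    (asc (n + 1) (Equiv.subRight c)).card = n := by
  rw [asc_subRight, Finset.card_erase_of_mem (Finset.mem_univ _), Finset.card_univ,
    Fintype.card_fin]
  omega

open Fin.NatCast Fin.CommRing in
lemma eq_subRight_of_asc_card (σ : Equiv.Perm (Fin (n + 1)))
    (h : (asc (n + 1) σ).card = n) : ∃ c, σ = Equiv.subRight c := by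
  classical
  have hsplit := Finset.card_filter_add_card_filter_not
    (s := (Finset.univ : Finset (Fin (n + 1))))
    (p := fun i => σ i < σ (finRotate (n + 1) i))
  have huniv : (Finset.univ : Finset (Fin (n + 1))).card = n + 1 := by
    simp
  have hdesc : (Finset.univ.filter
      (fun i => ¬ σ i < σ (finRotate (n + 1) i))).card = 1 := by
    have : (asc (n + 1) σ).card
        = (Finset.univ.filter (fun i => σ i < σ (finRotate (n + 1) i))).card := rfl
    omega
  obtain ⟨i0, hi0⟩ := Finset.card_eq_one.1 hdesc
  have hasc : ∀ x : Fin (n + 1), x ≠ i0 → σ x < σ (x + 1) := by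
    intro x hx
    by_contra hcon
    have : x ∈ Finset.univ.filter (fun i => ¬ σ i < σ (finRotate (n + 1) i)) := by
      rw [Finset.mem_filter]
      refine ⟨Finset.mem_univ _, ?_⟩
      rwa [finRotate_succ_apply]
    rw [hi0, Finset.mem_singleton] at this
    exact hx this
  set c : Fin (n + 1) := i0 + 1 with hc
  refine ⟨c, ?_⟩
  set G : Fin (n + 1) → Fin (n + 1) := fun t => σ (c + t) with hG
  have hGmono : StrictMono G := by
    rw [Fin.strictMono_iff_lt_succ]
    intro i
    have hstep : c + i.castSucc ≠ i0 := by
      intro hcon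
      have h2 : c + (-1 : Fin (n + 1)) = i0 := by rw [hc]; ring
      have : i.castSucc = (-1 : Fin (n + 1)) := by
        have := hcon.trans h2.symm
        exact add_left_cancel this
      have hv := congrArg Fin.val this
      rw [Fin.coe_castSucc, Fin.coe_neg_one] at hv
      exact absurd hv (Nat.ne_of_lt i.isLt)
    have := hasc (c + i.castSucc) hstep
    have hsucc : c + i.castSucc + 1 = c + i.succ := by
      rw [← Fin.coeSucc_eq_succ]; ring
    rw [hsucc] at this
    exact this
  have hGinj : Function.Injective G := hGmono.injective
  have hGbij : Function.Bijective G := Finite.injective_iff_bijective.1 hGinj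
  have hGid : G = id := by
    have hr : Set.range G = Set.range (id : Fin (n + 1) → Fin (n + 1)) := by
      rw [Set.range_id, Set.range_eq_univ]
      exact hGbij.2
    exact (@StrictMono.range_inj (Fin (n + 1)) (Fin (n + 1)) _ _
      (inferInstance : WellFoundedLT (Fin (n + 1))) G id hGmono strictMono_id).1 hr
  ext x
  have := congrFun hGid (x - c)
  simp only [hG, id] at this
  rw [add_sub_cancel] at this
  rw [this, Equiv.subRight_apply]

lemma domEdges_injective : Function.Injective (domEdges (n := n)) := by
  intro σ τ h
  have key : ∀ p q : Fin n, σ p < σ q ↔ τ p < τ q := by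
    intro p q
    have := Finset.ext_iff.mp h (p, q)
    simpa [domEdges] using this
  have hm : StrictMono (fun x => τ (σ.symm x)) := by
    intro a b hab
    exact (key (σ.symm a) (σ.symm b)).mp (by simpa using hab)
  have hid : (fun x => τ (σ.symm x)) = id := by
    have hbij : Function.Bijective (fun x => τ (σ.symm x)) :=
      (σ.symm.trans τ).bijective
    have hr : Set.range (fun x => τ (σ.symm x))
        = Set.range (id : Fin n → Fin n) := by
      rw [Set.range_id, Set.range_eq_univ]
      exact hbij.2
    exact (@StrictMono.range_inj (Fin n) (Fin n) _ _
      (inferInstance : WellFoundedLT (Fin n)) _ id hm strictMono_id).1 hr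
  ext x
  have h2 : τ x = σ x := by
    have := congrFun hid (σ x)
    simpa using this
  exact congrArg Fin.val h2.symm

end CycleRank

open CycleRank in
/-- the edge rankability `R_e(C) = 1 - k·p/(k_max·p_max)` of the directed
cycle of length `n ≥ 3` equals `1 - (2 + (n-1)(n-2))/(n!·(n-1))`, where `k` is the
minimum number of edge changes to a complete dominance graph, `p` the number of
complete dominance graphs reachable in `k` changes, `k_max = n(n-1)/2`, `p_max = n!`. -/
theorem cycle_edge_rankability (n k p : ℕ) (hn : 3 ≤ n)
    (hk : IsLeast {m : ℕ | ∃ E : Finset (Fin n × Fin n), IsDom E ∧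
        (symmDiff (cycleEdges n) E).card = m} k)
    (hp : {E : Finset (Fin n × Fin n) | IsDom E ∧
        (symmDiff (cycleEdges n) E).card = k}.ncard = p) :
    1 - (k * p : ℝ) / ((n : ℝ) * ((n : ℝ) - 1) / 2 * (n.factorial : ℝ)) =
      1 - (2 + ((n : ℝ) - 1) * ((n : ℝ) - 2)) / ((n.factorial : ℝ) * ((n : ℝ) - 1)) := by
  obtain ⟨m, rfl⟩ : ∃ m, n = m + 1 := ⟨n - 1, by omega⟩
  have hm : 2 ≤ m := by omega
  -- basic facts about L
  have hL : 2 * L (m + 1) + (m + 1) = (m + 1) * (m + 1) := two_mul_L (m + 1)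
  have hMge : m ≤ m * m := Nat.le_mul_of_pos_left m (by omega)
  have hring : (m + 1) * (m + 1) = m * m + 2 * m + 1 := by ring
  have hLm : m ≤ L (m + 1) := by omega
  -- value of k
  have hkval : k = 1 + (L (m + 1) - m) := by
    obtain ⟨⟨E, ⟨σ, rfl⟩, hE⟩, hlb⟩ := hk
    have h1 : k = (m + 1 - (asc (m + 1) σ).card) + (L (m + 1) - (asc (m + 1) σ).card) := by
      rw [← hE, card_symmDiff]
    have h2 : (asc (m + 1) σ).card ≤ m := asc_card_le σ
    have h3 : (asc (m + 1) σ).card ≤ L (m + 1) := asc_card_le_L σ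
    have h4 : 1 + (L (m + 1) - m) ∈ {m' : ℕ | ∃ E : Finset (Fin (m + 1) × Fin (m + 1)),
        IsDom E ∧ (symmDiff (cycleEdges (m + 1)) E).card = m'} := by
      refine ⟨domEdges (Equiv.subRight (0 : Fin (m + 1))), ⟨_, rfl⟩, ?_⟩
      rw [card_symmDiff, asc_subRight_card]
      omega
    have h5 := hlb h4
    omega
  -- the set of optimal dominance graphs
  have hset : {E : Finset (Fin (m + 1) × Fin (m + 1)) | IsDom E ∧
        (symmDiff (cycleEdges (m + 1)) E).card = k}
      = Set.range (fun c : Fin (m + 1) => domEdges (Equiv.subRight c)) := by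
    ext E
    simp only [Set.mem_setOf_eq, Set.mem_range]
    constructor
    · rintro ⟨⟨σ, rfl⟩, hE⟩
      rw [card_symmDiff] at hE
      have h2 : (asc (m + 1) σ).card ≤ m := asc_card_le σ
      have h3 : (asc (m + 1) σ).card ≤ L (m + 1) := asc_card_le_L σ
      have hA : (asc (m + 1) σ).card = m := by omega
      obtain ⟨c, rfl⟩ := eq_subRight_of_asc_card σ hA
      exact ⟨c, rfl⟩
    · rintro ⟨c, rfl⟩
      refine ⟨⟨_, rfl⟩, ?_⟩
      rw [card_symmDiff, asc_subRight_card]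
      omega
  -- value of p
  have hpval : p = m + 1 := by
    rw [← hp, hset]
    have hinj : Function.Injective (fun c : Fin (m + 1) => domEdges (Equiv.subRight c)) := by
      intro c c' h
      have h1 : (Equiv.subRight c : Equiv.Perm (Fin (m + 1))) = Equiv.subRight c' :=
        domEdges_injective h
      have h2 := congrFun (congrArg (fun e : Equiv.Perm (Fin (m + 1)) => (e : Fin (m + 1) → Fin (m + 1))) h1) 0
      simp only [Equiv.subRight_apply] at h2
      have : c = c' := by
        have := congrArg (fun z => (0 : Fin (m + 1)) - z) h2
        simpa using this
      exact this
    rw [← Set.image_univ, Set.ncard_image_of_injective _ hinj, Set.ncard_univ,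
      Nat.card_eq_fintype_card, Fintype.card_fin]
  -- numeric identity
  have hknat : 2 * k + m = m * m + 2 := by omega
  have hkcast : 2 * (k : ℝ) + (m : ℝ) = (m : ℝ) * (m : ℝ) + 2 := by
    exact_mod_cast congrArg (fun t : ℕ => (t : ℝ)) hknat
  have hmR : (2 : ℝ) ≤ (m : ℝ) := by exact_mod_cast hm
  have hF : ((m + 1).factorial : ℝ) ≠ 0 := by
    exact_mod_cast Nat.factorial_ne_zero (m + 1)
  have hm0 : (m : ℝ) ≠ 0 := by linarith
  have hm1 : (m : ℝ) + 1 ≠ 0 := by linarith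
  subst hpval
  push_cast
  have hsimp : ((m : ℝ) + 1) - 1 = (m : ℝ) := by ring
  rw [hsimp]
  have hF' : (0 : ℝ) < ((m + 1).factorial : ℝ) := by
    exact_mod_cast Nat.factorial_pos (m + 1)
  have hmpos : (0 : ℝ) < (m : ℝ) := by linarith
  congr 1
  rw [div_eq_div_iff]
  · linear_combination (((m : ℝ) + 1) * ((m + 1).factorial : ℝ) * (m : ℝ) / 2) * hkcast
  · positivity
  · positivity
end

section
/- For n ≥ 4 even, the Hausdorff distance between σ(L) = {1 - e^{2kπi/n} : 0 ≤ k ≤ n-1} and σ(S) = {0, 1, ..., n-1} equals n - 3. -/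
open Complex

noncomputable def sv (A B : Set ℂ) : ℝ :=
  sSup ((fun x => sInf ((fun y => ‖x - y‖) '' B)) '' A)

noncomputable def hd (A B : Set ℂ) : ℝ := max (sv A B) (sv B A)

/-- for even `n ≥ 4`, the Hausdorff distance between
`σ(L) = {1 - e^{2kπi/n} : 0 ≤ k ≤ n-1}` and `σ(S) = {0,...,n-1}` is `n - 3`. -/
theorem hd_cycle_laplacian_even (n : ℕ) (hn : 4 ≤ n) (hne : Even n) :
    hd {z : ℂ | ∃ k : ℕ, k < n ∧ z = 1 - Complex.exp (2 * k * Real.pi * I / n)}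
       {z : ℂ | ∃ k : ℕ, k < n ∧ z = (k : ℂ)} = (n : ℝ) - 3 := by
  obtain ⟨m, hm⟩ := hne
  have hm1 : 1 ≤ m := by omega
  have hnR : (4:ℝ) ≤ (n:ℝ) := by exact_mod_cast hn
  have hnc : (n:ℂ) ≠ 0 := Nat.cast_ne_zero.mpr (by omega)
  set A : Set ℂ := {z : ℂ | ∃ k : ℕ, k < n ∧ z = 1 - Complex.exp (2 * k * Real.pi * I / n)} with hAdef
  set B : Set ℂ := {z : ℂ | ∃ k : ℕ, k < n ∧ z = (k : ℂ)} with hBdef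
  have habs1 : ∀ k : ℕ, ‖Complex.exp (2 * k * Real.pi * I / n)‖ = 1 := by
    intro k
    rw [show (2 * (k:ℂ) * (Real.pi:ℂ) * I / n) = ((2 * k * Real.pi / n : ℝ) : ℂ) * I by
      push_cast; ring]
    exact Complex.norm_exp_ofReal_mul_I _
  have hA0 : (0:ℂ) ∈ A := by
    refine ⟨0, by omega, ?_⟩
    norm_num
  have hA2 : (2:ℂ) ∈ A := by
    refine ⟨m, by omega, ?_⟩
    have hmc : (m:ℂ) ≠ 0 := Nat.cast_ne_zero.mpr (by omega)
    have hnm : (n:ℂ) = 2 * m := by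
      rw [hm]; push_cast; ring
    rw [show (2 * (m:ℂ) * (Real.pi:ℂ) * I / n) = Real.pi * I by
      rw [hnm]; field_simp]
    rw [Complex.exp_pi_mul_I]
    ring
  have h1B : (1:ℂ) ∈ B := ⟨1, by omega, by norm_num⟩
  have hANE : A.Nonempty := ⟨0, hA0⟩
  have hBNE : B.Nonempty := ⟨1, h1B⟩
  have bddb : ∀ (x : ℂ) (S : Set ℂ), BddBelow ((fun y => ‖x - y‖) '' S) := by
    intro x S
    refine ⟨0, ?_⟩
    rintro r ⟨y, -, rfl⟩
    positivity
  -- sv A B ≤ n - 3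
  have hFB_le : ∀ x ∈ A, sInf ((fun y => ‖x - y‖) '' B) ≤ (n:ℝ) - 3 := by
    rintro x ⟨k, hk, rfl⟩
    refine le_trans (csInf_le (bddb _ _) ⟨1, h1B, rfl⟩) ?_
    show ‖(1 - Complex.exp (2 * k * Real.pi * I / n)) - 1‖ ≤ (n:ℝ) - 3
    have : (1 - Complex.exp (2 * k * Real.pi * I / n)) - 1
        = -(Complex.exp (2 * k * Real.pi * I / n)) := by ring
    rw [this, norm_neg, habs1]
    linarith
  -- sv B A ≤ n - 3
  have hFA_le : ∀ x ∈ B, sInf ((fun y => ‖x - y‖) '' A) ≤ (n:ℝ) - 3 := by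
    rintro x ⟨k, hk, rfl⟩
    rcases Nat.eq_zero_or_pos k with h0 | h1
    · subst h0
      refine le_trans (csInf_le (bddb _ _) ⟨0, hA0, rfl⟩) ?_
      show ‖(0:ℕ) - (0:ℂ)‖ ≤ (n:ℝ) - 3
      simp only [Nat.cast_zero, sub_zero, norm_zero]
      linarith
    · refine le_trans (csInf_le (bddb _ _) ⟨2, hA2, rfl⟩) ?_
      show ‖(k:ℂ) - 2‖ ≤ (n:ℝ) - 3
      have hcast : ((k:ℂ) - 2) = (((k:ℝ) - 2 : ℝ) : ℂ) := by push_cast; ring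
      rw [hcast, Complex.norm_real, Real.norm_eq_abs]
      have hk1 : (1:ℝ) ≤ (k:ℝ) := by exact_mod_cast h1
      have hkn : (k:ℝ) + 1 ≤ (n:ℝ) := by exact_mod_cast hk
      rw [abs_le]
      constructor <;> linarith
  -- lower bound: the point n-1 is at distance ≥ n-3 from every point of A
  have hmemB : ((n-1 : ℕ) : ℂ) ∈ B := ⟨n-1, by omega, rfl⟩
  have hc1 : ((n-1:ℕ):ℂ) = (n:ℂ) - 1 := by
    push_cast [Nat.cast_sub (by omega : 1 ≤ n)]; ring
  have hlow : (n:ℝ) - 3 ≤ sInf ((fun y => ‖((n-1 : ℕ) : ℂ) - y‖) '' A) := by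
    refine le_csInf (hANE.image _) ?_
    rintro r ⟨y, ⟨k, hk, rfl⟩, rfl⟩
    set e := Complex.exp (2 * k * Real.pi * I / n) with he
    have habse : ‖e‖ = 1 := habs1 k
    have key : ‖((n-1:ℕ):ℂ) - 1‖
        ≤ ‖((n-1:ℕ):ℂ) - (1 - e)‖ + ‖-e‖ := by
      have harr : ((n-1:ℕ):ℂ) - 1 = (((n-1:ℕ):ℂ) - (1 - e)) + (-e) := by ring
      rw [harr]
      exact norm_add_le _ _
    rw [norm_neg, habse] at key
    have habsc : ‖((n-1:ℕ):ℂ) - 1‖ = (n:ℝ) - 2 := by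
      rw [hc1, show ((n:ℂ) - 1 - 1) = (((n:ℝ) - 2 : ℝ) : ℂ) by push_cast; ring,
        Complex.norm_real, Real.norm_eq_abs, _root_.abs_of_nonneg (by linarith)]
    rw [habsc] at key
    show (n:ℝ) - 3 ≤ ‖((n-1:ℕ):ℂ) - (1 - e)‖
    linarith
  have hbddFA : BddAbove ((fun x => sInf ((fun y => ‖x - y‖) '' A)) '' B) := by
    refine ⟨(n:ℝ) - 3, ?_⟩
    rintro r ⟨x, hx, rfl⟩
    exact hFA_le x hx
  have hsvAB : sv A B ≤ (n:ℝ) - 3 := by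
    apply csSup_le (hANE.image _)
    rintro r ⟨x, hx, rfl⟩
    exact hFB_le x hx
  have hsvBA : sv B A = (n:ℝ) - 3 := by
    apply le_antisymm
    · apply csSup_le (hBNE.image _)
      rintro r ⟨x, hx, rfl⟩
      exact hFA_le x hx
    · exact le_trans hlow (le_csSup hbddFA ⟨((n-1:ℕ):ℂ), hmemB, rfl⟩)
  unfold hd
  rw [hsvBA]
  exact max_eq_right hsvAB
end

section
/- For n ≥ 3 odd, the Hausdorff distance between σ(L) = {1 - e^{2kπi/n} : 0 ≤ k ≤ n-1} and σ(S) = {0, 1, ..., n-1} equals |n - 2 - e^{-iπ/n}|. -/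
open Complex

private lemma abs_eval' (x θ : ℝ) : ‖(↑x - (1 - Complex.exp (↑θ * I)) : ℂ)‖ =
    Real.sqrt ((x - 1 + Real.cos θ)^2 + (Real.sin θ)^2) := by
  rw [Complex.exp_mul_I, Complex.norm_def, Complex.normSq_apply]
  simp [Complex.add_re, Complex.sub_re, Complex.mul_re, Complex.add_im, Complex.sub_im,
    Complex.mul_im, Complex.cos_ofReal_re, Complex.sin_ofReal_re]
  ring_nf

private lemma abs_eval2' (x θ : ℝ) : ‖(↑x - Complex.exp (↑θ * I) : ℂ)‖ =
    Real.sqrt ((x - Real.cos θ)^2 + (Real.sin θ)^2) := by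
  rw [Complex.exp_mul_I, Complex.norm_def, Complex.normSq_apply]
  simp [Complex.add_re, Complex.sub_re, Complex.mul_re, Complex.add_im, Complex.sub_im,
    Complex.mul_im, Complex.cos_ofReal_re, Complex.sin_ofReal_re]
  ring_nf

private lemma cos_bound' (n k : ℕ) (hn : 3 ≤ n) (hno : Odd n) (hk : k < n) :
    -Real.cos (Real.pi/n) ≤ Real.cos (2*(k:ℝ)*Real.pi/n) := by
  have hnpos : (0:ℝ) < n := by positivity
  have hpi := Real.pi_pos
  rw [← Real.cos_pi_sub]
  have hps : Real.pi - Real.pi/n = ((n:ℝ)-1)*Real.pi/n := by field_simp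
  rw [hps]
  have key : ∀ a b : ℕ, a ≤ b → b ≤ n →
      Real.cos ((b:ℝ)*Real.pi/n) ≤ Real.cos ((a:ℝ)*Real.pi/n) := by
    intro a b hab hbn
    apply Real.cos_le_cos_of_nonneg_of_le_pi
    · positivity
    · rw [div_le_iff₀ hnpos]
      nlinarith [(Nat.cast_le (α := ℝ)).mpr hbn]
    · have : (a:ℝ) ≤ b := Nat.cast_le.mpr hab
      gcongr
  have h2k : 2*k ≠ n := fun h => by obtain ⟨j, hj⟩ := hno; omega
  have hnm : (((n-1 : ℕ)):ℝ) = (n:ℝ)-1 := by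
    push_cast [Nat.cast_sub (by omega : 1 ≤ n)]; ring
  rcases lt_or_gt_of_ne h2k with h | h
  · have h1 : (2*(k:ℝ))*Real.pi/n = ((2*k : ℕ):ℝ)*Real.pi/n := by push_cast; ring
    rw [h1, ← hnm]
    exact key _ _ (by omega) (by omega)
  · have h1 : (2*(k:ℝ))*Real.pi/n = 2*Real.pi - ((2*n-2*k : ℕ):ℝ)*Real.pi/n := by
      push_cast [Nat.cast_sub (by omega : 2*k ≤ 2*n)]
      field_simp; ring
    rw [h1, Real.cos_two_pi_sub, ← hnm]
    exact key _ _ (by omega) (by omega)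

/-- for odd `n ≥ 3`, the Hausdorff distance between
`σ(L) = {1 - e^{2kπi/n} : 0 ≤ k ≤ n-1}` and `σ(S) = {0,...,n-1}` is `|n - 2 - e^{-iπ/n}|`. -/
theorem hd_cycle_laplacian_odd (n : ℕ) (hn : 3 ≤ n) (hno : Odd n) :
    hd {z : ℂ | ∃ k : ℕ, k < n ∧ z = 1 - Complex.exp (2 * k * Real.pi * I / n)}
       {z : ℂ | ∃ k : ℕ, k < n ∧ z = (k : ℂ)} =
      ‖(n : ℂ) - 2 - Complex.exp (-(Real.pi) * I / n)‖ := by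
  have hpi := Real.pi_pos
  have hnR : (0:ℝ) < n := by positivity
  have hnC : (n:ℂ) ≠ 0 := Nat.cast_ne_zero.mpr (by omega)
  set π := Real.pi
  set c := Real.cos (π/n) with hc
  set s := Real.sin (π/n) with hs
  set T := Real.sqrt (((n:ℝ) - 2 - c)^2 + s^2) with hT
  have hc1 : c ≤ 1 := Real.cos_le_one _
  have hsc : s^2 + c^2 = 1 := Real.sin_sq_add_cos_sq _
  -- target equals T
  have htarget : ‖(n : ℂ) - 2 - Complex.exp (-(Real.pi) * I / n)‖ = T := by
    have h1 : -(Real.pi) * I / n = ↑(-(π/n)) * I := by push_cast; field_simp; rfl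
    have h2 : (n : ℂ) - 2 = ((((n:ℝ) - 2 : ℝ)) : ℂ) := by push_cast; ring
    rw [h1, sub_sub, ← sub_sub, h2, abs_eval2', Real.cos_neg, Real.sin_neg, hT]
    congr 1
    rw [← hc, ← hs]
    ring
  -- c ≤ (n-2)/2
  have hchalf : 2*c ≤ (n:ℝ) - 2 := by
    rcases eq_or_lt_of_le hn with h3 | h4
    · have : (n:ℝ) = 3 := by exact_mod_cast congrArg Nat.cast h3.symm
      rw [this]
      have : c = 1/2 := by rw [hc, this]; exact Real.cos_pi_div_three
      rw [this]; norm_num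
    · have : (4:ℝ) ≤ n := by exact_mod_cast h4
      linarith
  have honeT : 1 ≤ T := by
    have hn3R : (3:ℝ) ≤ n := by exact_mod_cast hn
    have h1 : (1:ℝ) ≤ ((n:ℝ) - 2 - c)^2 + s^2 := by
      nlinarith [mul_nonneg (by linarith : (0:ℝ) ≤ (n:ℝ)-2) (by linarith : (0:ℝ) ≤ (n:ℝ)-2-2*c)]
    calc (1:ℝ) = Real.sqrt 1 := Real.sqrt_one.symm
      _ ≤ T := Real.sqrt_le_sqrt h1
  have hTnn : 0 ≤ T := Real.sqrt_nonneg _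
  set A : Set ℂ := {z : ℂ | ∃ k : ℕ, k < n ∧ z = 1 - Complex.exp (2 * k * Real.pi * I / n)}
    with hA
  set B : Set ℂ := {z : ℂ | ∃ k : ℕ, k < n ∧ z = (k : ℂ)} with hB
  -- rewriting exponents
  have hexp : ∀ k : ℕ, (2 * (k:ℂ) * Real.pi * I / n) = ↑(2*(k:ℝ)*π/n) * I := by
    intro k; push_cast; field_simp; rfl
  have hA0 : (0:ℂ) ∈ A := ⟨0, by omega, by simp⟩
  have hAne : A.Nonempty := ⟨0, hA0⟩
  have hB0 : (0:ℂ) ∈ B := ⟨0, by omega, by simp⟩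
  have hB1 : (1:ℂ) ∈ B := ⟨1, by omega, by simp⟩
  have hbb : ∀ (x : ℂ) (S : Set ℂ), BddBelow ((fun y => ‖x - y‖) '' S) := by
    intro x S
    exact ⟨0, by rintro _ ⟨y, _, rfl⟩; exact norm_nonneg _⟩
  -- the special point of A
  obtain ⟨j, hj⟩ := hno
  have hjn : j < n := by omega
  have hθj : 2*(j:ℝ)*π/n = ((n:ℝ)-1)*π/n := by
    have : (2*(j:ℝ)) = (n:ℝ)-1 := by
      have : ((2*j:ℕ):ℝ) = ((n-1:ℕ):ℝ) := by norm_cast; omega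
      push_cast [Nat.cast_sub (by omega : 1 ≤ n)] at this
      linarith
    rw [this]
  have hcosj : Real.cos (2*(j:ℝ)*π/n) = -c := by
    rw [hθj]
    have : ((n:ℝ)-1)*π/n = π - π/n := by field_simp
    rw [this, Real.cos_pi_sub, hc]
  have hsinj : Real.sin (2*(j:ℝ)*π/n) = s := by
    rw [hθj]
    have : ((n:ℝ)-1)*π/n = π - π/n := by field_simp
    rw [this, Real.sin_pi_sub, hs]
  -- bound for sv B A individual infima
  have hgm : ∀ m : ℕ, m < n → sInf ((fun y => ‖(m:ℂ) - y‖) '' A) ≤ T := by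
    intro m hm
    rcases Nat.lt_or_ge m 2 with hm2 | hm2
    · -- m = 0 or 1 : use 0 ∈ A
      refine le_trans (csInf_le (hbb _ _) ⟨0, hA0, rfl⟩) ?_
      interval_cases m
      · simpa using hTnn
      · simpa using honeT
    · -- use the point with k = j
      have hmem : (1 - Complex.exp (2 * (j:ℂ) * Real.pi * I / n)) ∈ A := ⟨j, hjn, rfl⟩
      refine le_trans (csInf_le (hbb _ _) ⟨_, hmem, rfl⟩) ?_
      have hcast : ((m:ℂ)) = (((m:ℝ)):ℂ) := by push_cast; ring
      beta_reduce
      rw [hexp j, hcast, abs_eval', hcosj, hsinj]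
      apply Real.sqrt_le_sqrt
      have hmn : (m:ℝ) ≤ (n:ℝ) - 1 := by
        have : ((m:ℕ):ℝ) ≤ ((n-1:ℕ):ℝ) := Nat.cast_le.mpr (by omega)
        push_cast [Nat.cast_sub (by omega : 1 ≤ n)] at this
        linarith
      have hm2' : (2:ℝ) ≤ m := by exact_mod_cast hm2
      nlinarith
  -- sv A B ≤ T
  have h1 : sv A B ≤ T := by
    apply csSup_le (hAne.image _)
    rintro _ ⟨x, ⟨k, hk, rfl⟩, rfl⟩
    refine le_trans (csInf_le (hbb _ _) ⟨1, hB1, rfl⟩) ?_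
    beta_reduce
    have : ‖1 - Complex.exp (2 * (k:ℂ) * Real.pi * I / n) - 1‖ = 1 := by
      rw [hexp k]
      simp [Complex.norm_exp]
    rw [this]; exact honeT
  -- sv B A ≤ T
  have h2 : sv B A ≤ T := by
    apply csSup_le (Set.Nonempty.image _ ⟨0, hB0⟩)
    rintro _ ⟨x, ⟨m, hm, rfl⟩, rfl⟩
    exact hgm m hm
  -- T ≤ sv B A
  have h3 : T ≤ sv B A := by
    have hmemB : ((n-1 : ℕ):ℂ) ∈ B := ⟨n-1, by omega, rfl⟩
    have hub : BddAbove ((fun x => sInf ((fun y => ‖x - y‖) '' A)) '' B) := by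
      refine ⟨T, ?_⟩
      rintro _ ⟨x, ⟨m, hm, rfl⟩, rfl⟩
      exact hgm m hm
    refine le_trans ?_ (le_csSup hub ⟨_, hmemB, rfl⟩)
    apply le_csInf (hAne.image _)
    rintro _ ⟨y, ⟨k, hk, rfl⟩, rfl⟩
    beta_reduce
    have hcast : (((n-1:ℕ)):ℂ) = ((((n:ℝ)-1 : ℝ)):ℂ) := by
      push_cast [Nat.cast_sub (by omega : 1 ≤ n)]; ring
    simp only [hexp k, hcast]
    rw [abs_eval']
    apply Real.sqrt_le_sqrt
    have hcb := cos_bound' n k hn ⟨j, hj⟩ hk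
    have hscb : Real.sin (2*(k:ℝ)*π/n)^2 + Real.cos (2*(k:ℝ)*π/n)^2 = 1 :=
      Real.sin_sq_add_cos_sq _
    have hck : Real.cos (2*(k:ℝ)*π/n) ≤ 1 := Real.cos_le_one _
    have hn3 : (3:ℝ) ≤ n := by exact_mod_cast hn
    nlinarith
  rw [htarget]
  unfold hd
  exact le_antisymm (max_le h1 h2) (le_trans h3 (le_max_right _ _))
end

section
/- The spectral rankability of the directed cycle C of length n (all edge weights 1) is R_s(C) = 1 - (2n-5)/(2n-2) if n is even (n ≥ 4), and R_s(C) = 1 - (n - 2 + |n - 2 - e^{-iπ/n}|)/(2n-2) if n is odd (n ≥ 3). -/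
open Complex

/-- Adjacency matrix of the directed `n`-cycle (all weights 1). -/
def cycleAdj (n : ℕ) : Matrix (Fin n) (Fin n) ℂ :=
  fun i j => if j = finRotate n i then 1 else 0

/-- `S = diag(n-1, n-2, ..., 0)`. -/
def matS (n : ℕ) : Matrix (Fin n) (Fin n) ℂ :=
  Matrix.diagonal (fun i => ((n - 1 - (i : ℕ) : ℕ) : ℂ))

/-- Spectral rankability `R_s(G) = 1 - (hd(σ(D),σ(S)) + hd(σ(L),σ(S)))/(2(n-1))`. -/
noncomputable def Rs (n : ℕ) (D L : Matrix (Fin n) (Fin n) ℂ) : ℝ :=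
  1 - (hd (spectrum ℂ D) (spectrum ℂ (matS n)) + hd (spectrum ℂ L) (spectrum ℂ (matS n))) /
    (2 * ((n : ℝ) - 1))

section Aux

open Matrix

lemma spec_matS (n : ℕ) (hn : 1 ≤ n) :
    spectrum ℂ (matS n) = (fun k : ℕ => (k : ℂ)) '' {k | k < n} := by
  rw [matS, spectrum_diagonal]
  ext z
  constructor
  · rintro ⟨i, rfl⟩
    exact ⟨n - 1 - (i : ℕ), by show n - 1 - (i : ℕ) < n; omega, rfl⟩
  · rintro ⟨k, hk, rfl⟩
    have hk' : k < n := hk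
    refine ⟨⟨n - 1 - k, by omega⟩, ?_⟩
    show ((n - 1 - (n - 1 - k) : ℕ) : ℂ) = (k : ℂ)
    exact Nat.cast_inj.mpr (by omega)

lemma cycleAdj_eq_perm (n : ℕ) : cycleAdj n = ((finRotate n).toPEquiv).toMatrix := by
  ext i j
  rw [PEquiv.toMatrix_toPEquiv_apply]
  simp [cycleAdj, Pi.single_apply]

open Fin.NatCast in
lemma finRotate_pow_apply (m k : ℕ) (i : Fin (m + 1)) :
    ((finRotate (m + 1)) ^ k) i = i + (k : Fin (m + 1)) := by
  induction k generalizing i with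
  | zero => simp
  | succ k ih =>
      rw [pow_succ', Equiv.Perm.mul_apply, ih, finRotate_succ_apply]
      rw [Nat.cast_add, Nat.cast_one, add_assoc]

open Fin.NatCast in
lemma finRotate_pow_self (m : ℕ) : (finRotate (m + 1)) ^ (m + 1) = 1 := by
  ext i
  rw [finRotate_pow_apply]
  simp [Fin.natCast_self]

lemma perm_toMatrix_pow (n : ℕ) (e : Equiv.Perm (Fin n)) (k : ℕ) :
    ((e.toPEquiv).toMatrix : Matrix (Fin n) (Fin n) ℂ) ^ k = ((e ^ k).toPEquiv).toMatrix := by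
  induction k with
  | zero =>
      rw [pow_zero, pow_zero,
        show (1 : Equiv.Perm (Fin n)) = Equiv.refl _ from rfl, Equiv.toPEquiv_refl,
        PEquiv.toMatrix_refl]
  | succ k ih =>
      rw [pow_succ, ih, ← PEquiv.toMatrix_trans, ← Equiv.toPEquiv_trans, pow_succ',
        Equiv.Perm.mul_def]

lemma cycleAdj_pow_self (n : ℕ) (hn : 1 ≤ n) : (cycleAdj n) ^ n = 1 := by
  obtain ⟨m, rfl⟩ : ∃ m, n = m + 1 := ⟨n - 1, by omega⟩
  rw [cycleAdj_eq_perm, perm_toMatrix_pow, finRotate_pow_self,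
    show (1 : Equiv.Perm (Fin (m+1))) = Equiv.refl _ from rfl, Equiv.toPEquiv_refl,
    PEquiv.toMatrix_refl]

lemma spec_cycleAdj (n : ℕ) (hn : 1 ≤ n) :
    spectrum ℂ (cycleAdj n) = {z : ℂ | z ^ n = 1} := by
  haveI : NeZero n := ⟨by omega⟩
  ext μ
  constructor
  · intro hμ
    have h1 : μ ^ n ∈ spectrum ℂ ((cycleAdj n) ^ n) :=
      spectrum.pow_image_subset (cycleAdj n) n ⟨μ, hμ, rfl⟩
    rw [cycleAdj_pow_self n hn, spectrum.one_eq] at h1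
    exact h1
  · intro hz
    have hzμ : μ ^ n = 1 := hz
    rw [spectrum.mem_iff]
    intro hunit
    rw [Matrix.isUnit_iff_isUnit_det, isUnit_iff_ne_zero] at hunit
    apply hunit
    rw [← Matrix.exists_mulVec_eq_zero_iff]
    refine ⟨fun i => μ ^ (i : ℕ), ?_, ?_⟩
    · intro h0
      have h1 := congrFun h0 0
      simp at h1
    · have key : ∀ k : ℕ, μ ^ (k % n) = μ ^ k := by
        intro k
        conv_rhs => rw [← Nat.div_add_mod k n]
        rw [pow_add, pow_mul, hzμ, one_pow, one_mul]
      have hA : (cycleAdj n).mulVec (fun j => μ ^ (j : ℕ)) = fun i : Fin n => μ ^ ((i : ℕ) + 1) := by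
        funext i
        simp only [Matrix.mulVec, dotProduct, cycleAdj, ite_mul, one_mul, zero_mul]
        rw [Finset.sum_ite_eq' Finset.univ (finRotate n i) (fun j => μ ^ (j : ℕ))]
        simp only [Finset.mem_univ, if_true]
        obtain ⟨m, rfl⟩ : ∃ m, n = m + 1 := ⟨n - 1, by omega⟩
        rw [finRotate_succ_apply,
          show (((i + 1 : Fin (m+1))) : ℕ) = ((i : ℕ) + 1) % (m + 1) by
            rw [Fin.add_def]; simp]
        exact key _
      funext i
      rw [Matrix.sub_mulVec, Matrix.algebraMap_eq_diagonal, hA]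
      simp only [Pi.sub_apply, Pi.zero_apply, Matrix.mulVec_diagonal, Pi.algebraMap_apply,
        Algebra.algebraMap_self_apply]
      rw [pow_succ]
      ring

end Aux

section Aux2

lemma spec_one_sub {n : ℕ} (A : Matrix (Fin n) (Fin n) ℂ) :
    spectrum ℂ (1 - A) = (fun z => 1 - z) '' spectrum ℂ A := by
  ext μ
  have hkey : ∀ ν : ℂ, algebraMap ℂ (Matrix (Fin n) (Fin n) ℂ) ν - (1 - A)
      = -(algebraMap ℂ (Matrix (Fin n) (Fin n) ℂ) (1 - ν) - A) := by
    intro ν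
    rw [map_sub, map_one]
    abel
  constructor
  · intro hμ
    refine ⟨1 - μ, ?_, by ring⟩
    rw [spectrum.mem_iff] at hμ ⊢
    rw [hkey, IsUnit.neg_iff] at hμ
    exact hμ
  · rintro ⟨z, hz, rfl⟩
    rw [spectrum.mem_iff] at hz ⊢
    rw [hkey, IsUnit.neg_iff, sub_sub_cancel]
    exact hz

lemma sInf_dist_le {B : Set ℂ} {x y : ℂ} (hy : y ∈ B) :
    sInf ((fun y => ‖x - y‖) '' B) ≤ ‖x - y‖ :=
  csInf_le ⟨0, by rintro r ⟨w, -, rfl⟩; positivity⟩ ⟨y, hy, rfl⟩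

lemma le_sInf_dist {B : Set ℂ} {x : ℂ} {v : ℝ} (hB : B.Nonempty)
    (h : ∀ y ∈ B, v ≤ ‖x - y‖) :
    v ≤ sInf ((fun y => ‖x - y‖) '' B) :=
  le_csInf (hB.image _) (by rintro r ⟨w, hw, rfl⟩; exact h w hw)

lemma sv_le {A B : Set ℂ} {v : ℝ} (hA : A.Nonempty)
    (h : ∀ x ∈ A, sInf ((fun y => ‖x - y‖) '' B) ≤ v) : sv A B ≤ v :=
  csSup_le (hA.image _) (by rintro r ⟨x, hx, rfl⟩; exact h x hx)

lemma sv_eq {A B : Set ℂ} {v : ℝ} (x : ℂ) (hx : x ∈ A)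
    (hxv : sInf ((fun y => ‖x - y‖) '' B) = v)
    (h : ∀ x ∈ A, sInf ((fun y => ‖x - y‖) '' B) ≤ v) : sv A B = v :=
  IsGreatest.csSup_eq ⟨⟨x, hx, hxv⟩, by rintro r ⟨z, hz, rfl⟩; exact h z hz⟩

lemma abs_le_of_sq_le {a b : ℝ} (ha : 0 ≤ a) (hb : 0 ≤ b) (h : a ^ 2 ≤ b ^ 2) : a ≤ b := by
  nlinarith

end Aux2

section Aux3

lemma cos_bound_aux {n j : ℕ} (hn : 3 ≤ n) (hj : 2 * j + 1 ≤ n) :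
    Real.cos (Real.pi - Real.pi / n) ≤ Real.cos (2 * Real.pi * j / n) := by
  have hπ := Real.pi_pos
  have hn' : (0:ℝ) < n := by positivity
  have hc : (2 * (j:ℝ) + 1) ≤ n := by exact_mod_cast hj
  apply Real.cos_le_cos_of_nonneg_of_le_pi
  · positivity
  · have : 0 ≤ Real.pi / n := by positivity
    linarith
  · rw [div_le_iff₀ hn', sub_mul, div_mul_cancel₀ _ (ne_of_gt hn')]
    nlinarith

lemma re_root_ge {n : ℕ} (hn : 3 ≤ n) (hodd : Odd n) {z : ℂ} (hz : z ^ n = 1) :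
    -Real.cos (Real.pi / n) ≤ z.re := by
  haveI : NeZero n := ⟨by omega⟩
  obtain ⟨k, hk, rfl⟩ := (Complex.isPrimitiveRoot_exp n (by omega)).eq_pow_of_pow_eq_one hz
  rw [← Complex.exp_nat_mul]
  have h2 : (k:ℂ) * (2 * (Real.pi : ℂ) * Complex.I / n) =
      ((2 * Real.pi * k / n : ℝ) : ℂ) * Complex.I := by
    push_cast
    ring
  rw [h2, Complex.exp_ofReal_mul_I_re, ← Real.cos_pi_sub]
  rcases le_or_gt (2 * k + 1) n with hcase | hcase
  · exact cos_bound_aux hn hcase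
  · -- n < 2k+1, so n ≤ 2k, and since k < n, set j = n - k with 2j+1 ≤ n (n odd)
    have hn0 : (0:ℝ) < n := by positivity
    have hne : 2 * (n - k) + 1 ≤ n := by
      rcases hodd with ⟨t, rfl⟩
      omega
    have := cos_bound_aux hn hne
    have heq : 2 * Real.pi * ((n : ℝ) - k) / n = 2 * Real.pi - 2 * Real.pi * k / n := by
      field_simp
    have hcast : ((n - k : ℕ) : ℝ) = (n:ℝ) - k := by
      have : k ≤ n := by omega
      push_cast [this]
      ring
    rw [hcast, heq, Real.cos_two_pi_sub] at this
    exact this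

end Aux3

section Aux4

lemma root_abs_one {n : ℕ} (hn : 1 ≤ n) {z : ℂ} (hz : z ^ n = 1) : ‖z‖ = 1 := by
  have h : (‖z‖) ^ n = 1 := by rw [← norm_pow, hz, norm_one]
  have h0 : 0 ≤ ‖z‖ := norm_nonneg z
  rcases lt_trichotomy (‖z‖) 1 with hlt | he | hgt
  · have := pow_lt_one₀ h0 hlt (by omega : n ≠ 0)
    linarith
  · exact he
  · have := one_lt_pow₀ hgt (by omega : n ≠ 0)
    linarith

lemma root_normSq_one {n : ℕ} (hn : 1 ≤ n) {z : ℂ} (hz : z ^ n = 1) :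
    z.re * z.re + z.im * z.im = 1 := by
  have h := root_abs_one hn hz
  have h2 : ‖z‖ ^ 2 = 1 := by rw [h]; norm_num
  rw [Complex.sq_norm, Complex.normSq_apply] at h2
  exact h2

lemma E_rewrite (n : ℕ) :
    (-(Real.pi : ℂ) * Complex.I / (n : ℂ)) = ((-(Real.pi / n) : ℝ) : ℂ) * Complex.I := by
  push_cast
  ring

lemma E_re (n : ℕ) :
    (Complex.exp (-(Real.pi : ℂ) * Complex.I / (n : ℂ))).re = Real.cos (Real.pi / n) := by
  rw [E_rewrite, Complex.exp_ofReal_mul_I_re, Real.cos_neg]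

lemma E_normSq (n : ℕ) :
    (Complex.exp (-(Real.pi : ℂ) * Complex.I / (n : ℂ))).re *
      (Complex.exp (-(Real.pi : ℂ) * Complex.I / (n : ℂ))).re +
    (Complex.exp (-(Real.pi : ℂ) * Complex.I / (n : ℂ))).im *
      (Complex.exp (-(Real.pi : ℂ) * Complex.I / (n : ℂ))).im = 1 := by
  have h : ‖Complex.exp (-(Real.pi : ℂ) * Complex.I / (n : ℂ))‖ = 1 := by
    rw [Complex.norm_exp, E_rewrite]
    simp
  have h2 := congrArg (fun t : ℝ => t ^ 2) h
  simp only [Complex.sq_norm, Complex.normSq_apply] at h2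
  simpa using h2

lemma neg_E_root {n : ℕ} (hn : 3 ≤ n) (hodd : Odd n) :
    (-(Complex.exp (-(Real.pi : ℂ) * Complex.I / (n : ℂ)))) ^ n = 1 := by
  have hn0 : (n : ℂ) ≠ 0 := by
    exact_mod_cast (by omega : (n:ℕ) ≠ 0)
  rw [hodd.neg_pow, ← Complex.exp_nat_mul]
  have : (n : ℂ) * (-(Real.pi : ℂ) * Complex.I / (n : ℂ)) = -((Real.pi : ℂ) * Complex.I) := by
    field_simp
  rw [this, Complex.exp_neg, Complex.exp_pi_mul_I]
  norm_num

lemma two_cos_le {n : ℕ} (hn : 3 ≤ n) :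
    2 * Real.cos (Real.pi / n) ≤ (n : ℝ) - 2 := by
  rcases eq_or_lt_of_le hn with h3 | h4
  · rw [← h3]
    norm_num [Real.cos_pi_div_three]
  · have := Real.cos_le_one (Real.pi / n)
    have hn4 : (4 : ℝ) ≤ n := by exact_mod_cast h4
    linarith

end Aux4

section Aux5

lemma svA {n : ℕ} (hn : 2 ≤ n) :
    sv {1} ((fun k : ℕ => (k : ℂ)) '' {k | k < n}) = 0 := by
  have h1N : (1 : ℂ) ∈ (fun k : ℕ => (k : ℂ)) '' {k | k < n} :=
    ⟨1, by show 1 < n; omega, by norm_num⟩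
  have key : sInf ((fun y => ‖(1:ℂ) - y‖) ''
      ((fun k : ℕ => (k : ℂ)) '' {k | k < n})) = 0 := by
    apply le_antisymm
    · simpa using sInf_dist_le (x := 1) h1N
    · apply le_sInf_dist ⟨1, h1N⟩
      intro y hy
      positivity
  refine sv_eq 1 (Set.mem_singleton 1) key ?_
  intro x hx
  rw [Set.mem_singleton_iff] at hx
  subst hx
  rw [key]

lemma inner_singleton (x : ℂ) :
    sInf ((fun y => ‖x - y‖) '' {1}) = ‖x - 1‖ := by
  rw [Set.image_singleton, csInf_singleton]

lemma abs_natCast_sub_one (k : ℕ) : ‖(k:ℂ) - 1‖ = |(k:ℝ) - 1| := by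
  rw [show ((k:ℂ) - 1) = (((k:ℝ) - 1 : ℝ) : ℂ) by push_cast; ring, Complex.norm_real, Real.norm_eq_abs]

lemma svB {n : ℕ} (hn : 3 ≤ n) :
    sv ((fun k : ℕ => (k : ℂ)) '' {k | k < n}) {1} = (n:ℝ) - 2 := by
  have hn3 : (3:ℝ) ≤ n := by exact_mod_cast hn
  refine sv_eq ((n-1 : ℕ) : ℂ) ⟨n-1, by show n-1<n; omega, rfl⟩ ?_ ?_
  · rw [inner_singleton, abs_natCast_sub_one,
      Nat.cast_sub (by omega : 1 ≤ n), Nat.cast_one,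
      show (n:ℝ)-1-1 = (n:ℝ)-2 by ring]
    exact abs_of_nonneg (by linarith)
  · rintro x ⟨k, hk, rfl⟩
    rw [inner_singleton, abs_natCast_sub_one]
    have hk' : (k:ℝ) ≤ (n:ℝ) - 1 := by
      have : ((k:ℝ) + 1) ≤ n := by exact_mod_cast (hk : k < n)
      linarith
    have hk0 : (0:ℝ) ≤ k := Nat.cast_nonneg k
    rw [abs_le]
    constructor <;> linarith

lemma svL_le {n : ℕ} (hn : 2 ≤ n) :
    sv ((fun z => 1 - z) '' {z : ℂ | z ^ n = 1}) ((fun k : ℕ => (k : ℂ)) '' {k | k < n}) ≤ 1 := by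
  refine sv_le ⟨(1:ℂ) - 1, ⟨1, by simp, rfl⟩⟩ ?_
  rintro x ⟨z, hz, rfl⟩
  have h1 : sInf ((fun y => ‖(1 - z) - y‖) ''
      ((fun k : ℕ => (k : ℂ)) '' {k | k < n})) ≤ ‖(1 - z) - ((1:ℕ):ℂ)‖ :=
    sInf_dist_le ⟨1, by show 1 < n; omega, rfl⟩
  calc sInf _ ≤ ‖(1 - z) - ((1:ℕ):ℂ)‖ := h1
    _ = ‖z‖ := by
        rw [show (1 - z) - ((1:ℕ):ℂ) = -z by push_cast; ring, norm_neg]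
    _ = 1 := root_abs_one (by omega) hz

end Aux5

section Aux6

lemma abs_natCast_sub (a : ℝ) (k : ℕ) : ‖(k:ℂ) - (a:ℂ)‖ = |(k:ℝ) - a| := by
  rw [show ((k:ℂ) - (a:ℂ)) = (((k:ℝ) - a : ℝ) : ℂ) by push_cast; ring, Complex.norm_real, Real.norm_eq_abs]

lemma svNL_even {n : ℕ} (hn : 4 ≤ n) (he : Even n) :
    sv ((fun k : ℕ => (k : ℂ)) '' {k | k < n}) ((fun z => 1 - z) '' {z : ℂ | z ^ n = 1})
      = (n:ℝ) - 3 := by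
  have hn4 : (4:ℝ) ≤ n := by exact_mod_cast hn
  have hneg1 : ((-1 : ℂ)) ∈ {z : ℂ | z ^ n = 1} := by
    show (-1:ℂ)^n = 1
    exact he.neg_one_pow
  have hone : ((1 : ℂ)) ∈ {z : ℂ | z ^ n = 1} := by
    show (1:ℂ)^n = 1
    simp
  have hLne : ((fun z => 1 - z) '' {z : ℂ | z ^ n = 1}).Nonempty := ⟨1 - 1, ⟨1, hone, rfl⟩⟩
  refine sv_eq ((n-1 : ℕ) : ℂ) ⟨n-1, by show n-1<n; omega, rfl⟩ ?_ ?_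
  · -- sInf at n-1 equals n-3
    have hcast : ((n-1:ℕ):ℂ) = (n:ℂ) - 1 := by
      push_cast [show 1 ≤ n by omega]
      ring
    apply le_antisymm
    · have h := sInf_dist_le (B := (fun z => 1 - z) '' {z : ℂ | z ^ n = 1})
        (x := ((n-1:ℕ):ℂ)) (y := 1 - (-1)) ⟨-1, hneg1, rfl⟩
      calc sInf _ ≤ ‖((n-1:ℕ):ℂ) - (1 - (-1))‖ := h
        _ = (n:ℝ) - 3 := by
            rw [hcast, show ((n:ℂ) - 1 - (1 - (-1))) = (n:ℂ) - (3:ℝ) by push_cast; ring,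
              abs_natCast_sub]
            exact _root_.abs_of_nonneg (by linarith)
    · refine le_sInf_dist hLne ?_
      rintro y ⟨z, hz, rfl⟩
      have habs1 : ‖z‖ = 1 := root_abs_one (by omega) hz
      have ht := norm_add_le (((n-1:ℕ):ℂ) - (1 - z)) (-z)
      have h2 : ‖(((n-1:ℕ):ℂ) - (1 - z)) + -z‖ = (n:ℝ) - 2 := by
        rw [hcast, show ((n:ℂ) - 1 - (1 - z)) + -z = (n:ℂ) - (2:ℝ) by push_cast; ring,
          abs_natCast_sub, _root_.abs_of_nonneg (by linarith)]
      rw [h2, norm_neg, habs1] at ht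
      linarith
  · rintro x ⟨m, hm, rfl⟩
    have hm' : (m:ℝ) ≤ (n:ℝ) - 1 := by
      have : ((m:ℝ) + 1) ≤ n := by exact_mod_cast (hm : m < n)
      linarith
    rcases Nat.eq_zero_or_pos m with rfl | hm1
    · have h := sInf_dist_le (B := (fun z => 1 - z) '' {z : ℂ | z ^ n = 1})
        (x := ((0:ℕ):ℂ)) (y := 1 - 1) ⟨1, hone, rfl⟩
      calc sInf _ ≤ ‖((0:ℕ):ℂ) - (1 - 1)‖ := h
        _ = 0 := by simp
        _ ≤ (n:ℝ) - 3 := by linarith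
    · have hm1' : (1:ℝ) ≤ m := by exact_mod_cast hm1
      have h := sInf_dist_le (B := (fun z => 1 - z) '' {z : ℂ | z ^ n = 1})
        (x := ((m:ℕ):ℂ)) (y := 1 - (-1)) ⟨-1, hneg1, rfl⟩
      calc sInf _ ≤ ‖((m:ℕ):ℂ) - (1 - (-1))‖ := h
        _ = |(m:ℝ) - 2| := by
            rw [show ((m:ℂ) - (1 - (-1))) = (m:ℂ) - ((2:ℝ):ℂ) by push_cast; ring,
              abs_natCast_sub]
        _ ≤ (n:ℝ) - 3 := by
            rw [abs_le]
            constructor <;> linarith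

end Aux6

section Aux7

lemma svNL_odd {n : ℕ} (hn : 3 ≤ n) (ho : Odd n) :
    sv ((fun k : ℕ => (k : ℂ)) '' {k | k < n}) ((fun z => 1 - z) '' {z : ℂ | z ^ n = 1})
      = ‖(n:ℂ) - 2 - Complex.exp (-(Real.pi : ℂ) * Complex.I / (n : ℂ))‖ := by
  set E := Complex.exp (-(Real.pi : ℂ) * Complex.I / (n : ℂ)) with hE
  set V := ‖(n:ℂ) - 2 - E‖ with hV
  have hn3 : (3:ℝ) ≤ n := by exact_mod_cast hn
  have hEre : E.re = Real.cos (Real.pi / n) := E_re n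
  have hEsq : E.re * E.re + E.im * E.im = 1 := E_normSq n
  have hroot : (-E) ^ n = 1 := neg_E_root hn ho
  have h2c : 2 * Real.cos (Real.pi / n) ≤ (n:ℝ) - 2 := two_cos_le hn
  have hone : ((1 : ℂ)) ∈ {z : ℂ | z ^ n = 1} := by show (1:ℂ)^n = 1; simp
  have hnegE : (-E) ∈ {z : ℂ | z ^ n = 1} := hroot
  have hLne : ((fun z => 1 - z) '' {z : ℂ | z ^ n = 1}).Nonempty := ⟨1 - 1, ⟨1, hone, rfl⟩⟩
  have hV0 : 0 ≤ V := norm_nonneg _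
  have hVsq : V ^ 2 = ((n:ℝ) - 2 - E.re) ^ 2 + E.im ^ 2 := by
    rw [hV, Complex.sq_norm, Complex.normSq_apply]
    simp only [Complex.sub_re, Complex.sub_im, Complex.natCast_re, Complex.natCast_im]
    norm_num
    ring
  have hcast : ((n-1:ℕ):ℂ) = (n:ℂ) - 1 := by
    push_cast [show 1 ≤ n by omega]
    ring
  refine sv_eq ((n-1 : ℕ) : ℂ) ⟨n-1, by show n-1<n; omega, rfl⟩ ?_ ?_
  · apply le_antisymm
    · have h := sInf_dist_le (B := (fun z => 1 - z) '' {z : ℂ | z ^ n = 1})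
        (x := ((n-1:ℕ):ℂ)) (y := 1 - (-E)) ⟨-E, hnegE, rfl⟩
      calc sInf _ ≤ ‖((n-1:ℕ):ℂ) - (1 - (-E))‖ := h
        _ = V := by rw [hcast, show ((n:ℂ) - 1 - (1 - (-E))) = (n:ℂ) - 2 - E by ring]
    · refine le_sInf_dist hLne ?_
      rintro y ⟨z, hz, rfl⟩
      have hz1 : z.re * z.re + z.im * z.im = 1 := root_normSq_one (by omega) hz
      have hzre : -Real.cos (Real.pi / n) ≤ z.re := re_root_ge hn ho hz
      have hw : ((n-1:ℕ):ℂ) - (1 - z) = ((n:ℂ) - 2) + z := by rw [hcast]; ring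
      have hWsq : (‖((n-1:ℕ):ℂ) - (1 - z)‖) ^ 2
          = ((n:ℝ) - 2 + z.re) ^ 2 + z.im ^ 2 := by
        rw [hw, Complex.sq_norm, Complex.normSq_apply]
        simp only [Complex.add_re, Complex.add_im, Complex.sub_re, Complex.sub_im,
          Complex.natCast_re, Complex.natCast_im]
        norm_num
        ring
      refine abs_le_of_sq_le hV0 (norm_nonneg _) ?_
      rw [hVsq, hWsq]
      nlinarith [mul_nonneg (by linarith : (0:ℝ) ≤ (n:ℝ) - 2)
        (by rw [← hEre] at hzre; linarith : (0:ℝ) ≤ z.re + E.re)]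
  · rintro x ⟨m, hm, rfl⟩
    have hm' : (m:ℝ) ≤ (n:ℝ) - 1 := by
      have : ((m:ℝ) + 1) ≤ n := by exact_mod_cast (hm : m < n)
      linarith
    rcases Nat.eq_zero_or_pos m with rfl | hm1
    · have h := sInf_dist_le (B := (fun z => 1 - z) '' {z : ℂ | z ^ n = 1})
        (x := ((0:ℕ):ℂ)) (y := 1 - 1) ⟨1, hone, rfl⟩
      calc sInf _ ≤ ‖((0:ℕ):ℂ) - (1 - 1)‖ := h
        _ = 0 := by simp
        _ ≤ V := hV0
    · have hm1' : (1:ℝ) ≤ m := by exact_mod_cast hm1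
      have h := sInf_dist_le (B := (fun z => 1 - z) '' {z : ℂ | z ^ n = 1})
        (x := ((m:ℕ):ℂ)) (y := 1 - (-E)) ⟨-E, hnegE, rfl⟩
      have hWsq : (‖(m:ℂ) - (1 - (-E))‖) ^ 2
          = ((m:ℝ) - 1 - E.re) ^ 2 + E.im ^ 2 := by
        rw [show ((m:ℂ) - (1 - (-E))) = ((m:ℂ) - 1) - E by ring,
          Complex.sq_norm, Complex.normSq_apply]
        simp only [Complex.sub_re, Complex.sub_im, Complex.natCast_re, Complex.natCast_im]
        norm_num
        ring
      calc sInf _ ≤ ‖((m:ℕ):ℂ) - (1 - (-E))‖ := h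
        _ ≤ V := by
            refine abs_le_of_sq_le (norm_nonneg _) hV0 ?_
            rw [hVsq, hWsq]
            nlinarith [mul_nonneg (by linarith : (0:ℝ) ≤ (n:ℝ) - 1 - m)
              (by rw [hEre]; linarith : (0:ℝ) ≤ (n:ℝ) - 2 + ((m:ℝ) - 1) - 2 * E.re)]

end Aux7

section Main

lemma Rs_formula {n : ℕ} (hn : 3 ≤ n) (V : ℝ)
    (hVval : sv ((fun k : ℕ => (k : ℂ)) '' {k | k < n})
      ((fun z => 1 - z) '' {z : ℂ | z ^ n = 1}) = V)
    (h1V : 1 ≤ V) :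
    Rs n 1 (1 - cycleAdj n) = 1 - (((n:ℝ) - 2) + V) / (2 * ((n:ℝ) - 1)) := by
  haveI : NeZero n := ⟨by omega⟩
  haveI : Nontrivial (Matrix (Fin n) (Fin n) ℂ) := inferInstance
  have hn3 : (3:ℝ) ≤ n := by exact_mod_cast hn
  have hσD : spectrum ℂ (1 : Matrix (Fin n) (Fin n) ℂ) = {1} := spectrum.one_eq
  have hσS := spec_matS n (by omega)
  have hσL : spectrum ℂ (1 - cycleAdj n)
      = (fun z => 1 - z) '' {z : ℂ | z ^ n = 1} := by
    rw [spec_one_sub, spec_cycleAdj n (by omega)]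
  rw [Rs, hd, hd, hσD, hσS, hσL, svA (by omega), svB hn, hVval,
    max_eq_right (by linarith : (0:ℝ) ≤ (n:ℝ) - 2),
    max_eq_right (le_trans (svL_le (by omega)) h1V)]


/-- the spectral rankability of the directed `n`-cycle (out-degree matrix
`D = I`, Laplacian `L = I - A`) equals `1 - (2n-5)/(2n-2)` for even `n ≥ 4` and
`1 - (n - 2 + |n - 2 - e^{-iπ/n}|)/(2n-2)` for odd `n ≥ 3`. -/
theorem cycle_spectral_rankability (n : ℕ) :
    (4 ≤ n → Even n →
      Rs n 1 (1 - cycleAdj n) = 1 - (2 * (n : ℝ) - 5) / (2 * (n : ℝ) - 2)) ∧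
    (3 ≤ n → Odd n →
      Rs n 1 (1 - cycleAdj n) =
        1 - ((n : ℝ) - 2 + ‖(n : ℂ) - 2 - Complex.exp (-(Real.pi) * I / n)‖) /
          (2 * (n : ℝ) - 2)) := by
  constructor
  · intro hn4 he
    have hn4' : (4:ℝ) ≤ n := by exact_mod_cast hn4
    rw [Rs_formula (by omega) ((n:ℝ) - 3) (svNL_even hn4 he) (by linarith)]
    rw [show 2 * ((n:ℝ) - 1) = 2 * (n:ℝ) - 2 by ring]
    ring_nf
  · intro hn3 ho
    have hn3' : (3:ℝ) ≤ n := by exact_mod_cast hn3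
    set E := Complex.exp (-(Real.pi : ℂ) * Complex.I / (n : ℂ)) with hE
    set V := ‖(n:ℂ) - 2 - E‖ with hV
    have hEre : E.re = Real.cos (Real.pi / n) := E_re n
    have hEsq : E.re * E.re + E.im * E.im = 1 := E_normSq n
    have h2c : 2 * Real.cos (Real.pi / n) ≤ (n:ℝ) - 2 := two_cos_le hn3
    have hV0 : 0 ≤ V := norm_nonneg _
    have hVsq : V ^ 2 = ((n:ℝ) - 2 - E.re) ^ 2 + E.im ^ 2 := by
      rw [hV, Complex.sq_norm, Complex.normSq_apply]
      simp only [Complex.sub_re, Complex.sub_im, Complex.natCast_re, Complex.natCast_im]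
      norm_num
      ring
    have h1V : 1 ≤ V := by
      refine abs_le_of_sq_le (by norm_num) hV0 ?_
      rw [hVsq]
      nlinarith [mul_nonneg (by linarith : (0:ℝ) ≤ (n:ℝ) - 2)
        (by rw [hEre] at *; linarith : (0:ℝ) ≤ (n:ℝ) - 2 - 2 * E.re)]
    rw [Rs_formula (by omega) V (svNL_odd hn3 ho) h1V]
    rw [show 2 * ((n:ℝ) - 1) = 2 * (n:ℝ) - 2 by ring]
end Main
end
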